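/- arXiv:1101.3629 — 2 statements merged into one kernel-verified Lean document; each statement's English description precedes it below -/
import Mathlib

section
/- If an H(n,q,n−1,n−2) design exists, then for every s ≥ 1 an H(n,s·q,n−1,n−2) design exists. -/
/-!
Construction I with the zero-sum code over `ZMod s`, an MDS code of distance 2. Lift an
`H(n,q,w+1,w)` design `S` to the alphabet `β × α` by keeping the words whose `α`-part lies in `S`
and whose `β`-entries sum to zero. For a weight-`w` word `u`, the unique `t ∈ S` above the
`α`-part of `u` fills exactly one star `j` of `u`; a lifted word above `u` must therefore fill `j`
too, with `α`-letter that of `t` and `β`-letter forced by the zero-sum condition. Relabelling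
`ZMod s × Fin q ≃ Fin (s * q)` finishes.
-/

/-- Weight of a word over `Option α`: number of non-star (non-`none`) positions. -/
def wt {n : ℕ} {α : Type*} (u : Fin n → Option α) : ℕ :=
  (Finset.univ.filter fun i => ((u i).isSome : Prop)).card

/-- `SubFace v u` : the face of `v` is contained in the face of `u`, i.e. `v` agrees with `u`
on all non-star positions of `u`. -/
def SubFace {n : ℕ} {α : Type*} (v u : Fin n → Option α) : Prop :=
  ∀ i, ((u i).isSome : Prop) → v i = u i

/-- `H(n,q,w,t)` design over alphabet `α` (with `q = #α`): a set of weight-`w` words such that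
every weight-`t` word contains exactly one of them. -/
def IsH (n w t : ℕ) (α : Type*) (S : Set (Fin n → Option α)) : Prop :=
  (∀ s ∈ S, wt s = w) ∧
  ∀ u : Fin n → Option α, wt u = t → ∃! s, s ∈ S ∧ SubFace s u

/-- `A(n,q,w,t)` design over alphabet `α`: a set of weight-`t` words such that every
weight-`w` word is contained in exactly one of them. -/
def IsA (n w t : ℕ) (α : Type*) (S : Set (Fin n → Option α)) : Prop :=
  (∀ s ∈ S, wt s = t) ∧
  ∀ v : Fin n → Option α, wt v = w → ∃! s, s ∈ S ∧ SubFace v s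

variable {n : ℕ} {α β : Type*}

def mapWord (f : α → β) (x : Fin n → Option α) : Fin n → Option β :=
  fun i => (x i).map f

@[simp]
lemma wt_mapWord (f : α → β) (x : Fin n → Option α) : wt (mapWord f x) = wt x := by
  simp [wt, mapWord]

lemma SubFace.map (f : α → β) {v u : Fin n → Option α} (h : SubFace v u) :
    SubFace (mapWord f v) (mapWord f u) := by
  intro i hi
  rw [mapWord, Option.isSome_map] at hi
  simp only [mapWord, h i hi]

lemma subFace_mapWord_iff {f : α → β} (hf : f.Injective) {v u : Fin n → Option α} :
    SubFace (mapWord f v) (mapWord f u) ↔ SubFace v u := by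
  simp [SubFace, mapWord, (Option.map_injective hf).eq_iff]

lemma mapWord_update (f : α → β) (x : Fin n → Option α) (j : Fin n)
    (a : α) : mapWord f (Function.update x j (some a)) = Function.update (mapWord f x) j (some (f a)) :=
  Function.comp_update (Option.map f) x j (some a)

lemma subFace_update_of_eq_none {v : Fin n → Option α} {j : Fin n} (hj : v j = none)
    (a : Option α) : SubFace (Function.update v j a) v := by
  intro i hi
  have hij : i ≠ j := by rintro rfl; simp [hj] at hi
  exact Function.update_of_ne hij a v

lemma SubFace.exists_eq_update {t v : Fin n → Option α} (h : SubFace t v)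
    (hw : wt t = wt v + 1) : ∃ j a, v j = none ∧ t = Function.update v j (some a) := by
  set T := Finset.univ.filter fun i => ((t i).isSome : Prop)
  set V := Finset.univ.filter fun i => ((v i).isSome : Prop)
  have hVT : V ⊆ T := fun i hi => by
    simp only [V, T, Finset.mem_filter, Finset.mem_univ, true_and] at hi ⊢
    rwa [h i hi]
  obtain ⟨j, hj⟩ : ∃ j, T \ V = {j} := by
    rw [← Finset.card_eq_one, Finset.card_sdiff_of_subset hVT]
    exact Nat.sub_eq_of_eq_add' hw
  have hjT : j ∈ T ∧ j ∉ V := Finset.mem_sdiff.mp (hj ▸ Finset.mem_singleton_self j)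
  simp only [T, V, Finset.mem_filter, Finset.mem_univ, true_and] at hjT
  obtain ⟨a, ha⟩ := Option.isSome_iff_exists.mp hjT.1
  have hvj := Option.not_isSome_iff_eq_none.mp hjT.2
  refine ⟨j, a, hvj, funext fun k => ?_⟩
  rcases eq_or_ne k j with rfl | hkj
  · simpa using ha
  rw [Function.update_of_ne hkj]
  by_cases hvk : (v k).isSome
  · exact h k hvk
  have hkT : ¬ (t k).isSome := by
    have : k ∉ T \ V := by simp [hj, hkj]
    simpa [T, V, hvk] using this
  rw [Option.not_isSome_iff_eq_none.mp hkT, Option.not_isSome_iff_eq_none.mp hvk]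

lemma IsH.preimage_mapWord {w t : ℕ} {S : Set (Fin n → Option β)} (h : IsH n w t β S)
    (e : α ≃ β) : IsH n w t α (mapWord e ⁻¹' S) := by
  refine ⟨fun x hx => wt_mapWord e x ▸ h.1 _ hx, fun u hu => ?_⟩
  let E : (Fin n → Option α) ≃ (Fin n → Option β) := Equiv.piCongrRight fun _ => e.optionCongr
  refine (existsUnique_congr fun s => ?_).mpr
    (E.symm.existsUnique_congr_left.mp (h.2 (E u) ((wt_mapWord e u).trans hu)))
  rw [Set.mem_preimage, ← subFace_mapWord_iff e.injective]
  rfl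

section ZeroSumLift

variable [AddCommGroup β]

def fstSum (x : Fin n → Option (β × α)) : β := ∑ i, ((x i).map Prod.fst).getD 0

def zeroSumLift (S : Set (Fin n → Option α)) : Set (Fin n → Option (β × α)) :=
  {x | mapWord Prod.snd x ∈ S ∧ fstSum x = 0}

lemma fstSum_update_of_eq_none {x : Fin n → Option (β × α)} {j : Fin n}
    (hj : x j = none) (c : β) (a : α) :
    fstSum (Function.update x j (some (c, a))) = c + fstSum x := by
  have hsum := Finset.sum_eq_sum_sdiff_singleton_add (Finset.mem_univ j)
    fun i => ((x i).map Prod.fst).getD 0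
  simp only [hj, Option.map_none, Option.getD_none, add_zero] at hsum
  rw [fstSum, fstSum, hsum, ← Finset.sum_update_of_mem (Finset.mem_univ j)]
  congr 1
  ext i
  rcases eq_or_ne i j with rfl | hij <;> simp [*]

lemma IsH.zeroSumLift {w : ℕ} {S : Set (Fin n → Option α)} (h : IsH n (w + 1) w α S) :
    IsH n (w + 1) w (β × α) (zeroSumLift S) := by
  refine ⟨fun x hx => (wt_mapWord Prod.snd x) ▸ h.1 _ hx.1, fun u hu => ?_⟩
  obtain ⟨t, ⟨htS, htu⟩, ht_unique⟩ := h.2 (mapWord Prod.snd u) ((wt_mapWord _ u).trans hu)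
  obtain ⟨j, a, huj, rfl⟩ := htu.exists_eq_update ((h.1 t htS).trans (by simp [hu]))
  have huj' : u j = none := Option.map_eq_none_iff.mp huj
  refine ⟨Function.update u j (some (-fstSum u, a)),
    ⟨⟨?_, ?_⟩, subFace_update_of_eq_none huj' _⟩, ?_⟩
  · rwa [mapWord_update]
  · rw [fstSum_update_of_eq_none huj', neg_add_cancel]
  rintro y ⟨⟨hyS, hy0⟩, hyu⟩
  obtain ⟨k, ⟨c, b⟩, huk, rfl⟩ := hyu.exists_eq_update
    ((wt_mapWord _ _).symm.trans ((h.1 _ hyS).trans (by rw [hu])))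
  have hlet := ht_unique _ ⟨hyS, hyu.map Prod.snd⟩
  rw [mapWord_update] at hlet
  obtain rfl : k = j := by
    by_contra hkj
    have := congrFun hlet j
    rw [Function.update_of_ne (Ne.symm hkj), Function.update_self, huj] at this
    exact Option.some_ne_none a this.symm
  obtain rfl : b = a := Option.some_injective _ (by simpa using congrFun hlet k)
  rw [fstSum_update_of_eq_none huk] at hy0
  rw [eq_neg_of_add_eq_zero_left hy0]

end ZeroSumLift

theorem H_design_scale_general (n q : ℕ) (hn : 3 ≤ n)
    (hex : ∃ S : Set (Fin n → Option (Fin q)), IsH n (n - 1) (n - 2) (Fin q) S) :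
    ∀ s : ℕ, 1 ≤ s →
      ∃ S' : Set (Fin n → Option (Fin (s * q))), IsH n (n - 1) (n - 2) (Fin (s * q)) S' := by
  intro s hs
  obtain ⟨S, hS⟩ := hex
  have : NeZero s := ⟨by omega⟩
  obtain ⟨w, rfl⟩ : ∃ w, n = w + 2 := ⟨n - 2, by omega⟩
  have hlift : IsH (w + 2) (w + 1) w (ZMod s × Fin q) (zeroSumLift S) := IsH.zeroSumLift hS
  exact ⟨_, hlift.preimage_mapWord (Fintype.equivFinOfCardEq (by simp [ZMod.card])).symm⟩

theorem H_design_scale (n q : ℕ) (hn : 3 ≤ n) (hq : 1 ≤ q)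
    (hex : ∃ S : Set (Fin n → Option (Fin q)), IsH n (n - 1) (n - 2) (Fin q) S) :
    ∀ s : ℕ, 1 ≤ s →
      ∃ S' : Set (Fin n → Option (Fin (s * q))), IsH n (n - 1) (n - 2) (Fin (s * q)) S' :=
  H_design_scale_general n q hn hex
end

section
/- If an A(n,q,w,t) design exists, then C(n−t,w−t)·q^{w−t} divides C(n,w)·q^w. -/
/-!
Double counting. Every weight-`w` word contains exactly one block of the design, and a block `s`
of weight `t` is contained in exactly `C(n-t, w-t) q^(w-t)` words of weight `w` (choose the
`w - t` further non-star positions and the letters written there). Hence the number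
`C(n, w) q^w` of weight-`w` words is `|S| C(n-t, w-t) q^(w-t)`.
-/

open Finset

variable {n : ℕ} {α : Type*}

def supp (u : Fin n → Option α) : Finset (Fin n) :=
  univ.filter fun i => ((u i).isSome : Prop)

lemma mem_supp {u : Fin n → Option α} {i : Fin n} : i ∈ supp u ↔ (u i).isSome := by
  simp [supp]

lemma wt_eq_card_supp (u : Fin n → Option α) : wt u = #(supp u) := rfl

lemma SubFace.supp_subset {v s : Fin n → Option α} (h : SubFace v s) : supp s ⊆ supp v := by
  intro i hi
  rw [mem_supp] at hi ⊢
  rwa [h i hi]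

instance [DecidableEq α] (v u : Fin n → Option α) : Decidable (SubFace v u) :=
  inferInstanceAs (Decidable (∀ _, _ → _))

variable [Fintype α]

def fillAt (s : Fin n → Option α) (A : Finset (Fin n)) : Finset (Fin n → Option α) :=
  Fintype.piFinset fun i => if i ∈ A then univ.map .some else {s i}

lemma card_fillAt (s : Fin n → Option α) (A : Finset (Fin n)) :
    #(fillAt s A) = Fintype.card α ^ #A := by
  simp [fillAt, Fintype.card_piFinset, apply_ite card, prod_ite_mem]

lemma mem_fillAt_iff {s v : Fin n → Option α} {A : Finset (Fin n)} (hA : Disjoint A (supp s)) :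
    v ∈ fillAt s A ↔ SubFace v s ∧ supp v = A ∪ supp s := by
  have hsA : ∀ i ∈ A, s i = none := fun i hi =>
    Option.not_isSome_iff_eq_none.mp fun h => disjoint_left.mp hA hi (mem_supp.mpr h)
  have hsome : ∀ x : Option α, x ∈ univ.map .some ↔ x.isSome := fun x => by cases x <;> simp
  simp only [fillAt, Fintype.mem_piFinset, SubFace, Finset.ext_iff, mem_union, mem_supp]
  constructor
  · intro hv
    refine ⟨fun i hi => ?_, fun i => ?_⟩ <;> by_cases h : i ∈ A <;> grind
  · rintro ⟨hsub, hsupp⟩ i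
    by_cases h : i ∈ A <;> cases hvi : v i <;> cases hsi : s i <;> grind

variable [DecidableEq α]

lemma filter_subFace_supp_sdiff_eq_fillAt {s : Fin n → Option α} {A : Finset (Fin n)} {w : ℕ}
    (hA : Disjoint A (supp s)) (hw : #A + wt s = w) :
    ({v | (wt v = w ∧ SubFace v s) ∧ supp v \ supp s = A} : Finset (Fin n → Option α)) =
      fillAt s A := by
  ext v
  simp only [mem_filter, mem_univ, true_and, mem_fillAt_iff hA]
  constructor
  · rintro ⟨⟨-, hsub⟩, rfl⟩
    exact ⟨hsub, (sdiff_union_of_subset hsub.supp_subset).symm⟩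
  · rintro ⟨hsub, hv⟩
    refine ⟨⟨?_, hsub⟩, ?_⟩
    · rw [wt_eq_card_supp, hv, card_union_of_disjoint hA, ← wt_eq_card_supp, hw]
    · rw [hv, union_sdiff_right, sdiff_eq_self_of_disjoint hA]

theorem card_filter_wt_subFace (s : Fin n → Option α) {w : ℕ} (hs : wt s ≤ w) :
    #{v | wt v = w ∧ SubFace v s} =
      Nat.choose (n - wt s) (w - wt s) * Fintype.card α ^ (w - wt s) := by
  rw [card_eq_sum_card_fiberwise (f := fun v => supp v \ supp s)
    (t := (supp s)ᶜ.powersetCard (w - wt s))]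
  · rw [sum_congr rfl fun A hA => ?fiber, sum_const, card_powersetCard, card_compl,
      Fintype.card_fin, smul_eq_mul, ← wt_eq_card_supp]
    obtain ⟨hAs, hAcard⟩ := mem_powersetCard.mp hA
    rw [filter_filter, filter_subFace_supp_sdiff_eq_fillAt
      (subset_compl_iff_disjoint_right.mp hAs) (w := w) (by omega), card_fillAt, hAcard]
  · intro v hv
    simp only [mem_coe, mem_filter, mem_univ, true_and] at hv ⊢
    rw [mem_powersetCard, card_sdiff_of_subset hv.2.supp_subset, ← wt_eq_card_supp,
      ← wt_eq_card_supp, hv.1]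
    exact ⟨sdiff_eq_inter_compl (supp v) (supp s) ▸ inter_subset_right, rfl⟩

theorem card_filter_wt (w : ℕ) :
    #{v : Fin n → Option α | wt v = w} = Nat.choose n w * Fintype.card α ^ w := by
  have hnone : wt (fun _ : Fin n => (none : Option α)) = 0 := by simp [wt]
  have h := card_filter_wt_subFace (fun _ => none) (hnone ▸ Nat.zero_le w)
  rw [hnone] at h
  simpa [SubFace] using h

theorem IsA.card_filter_wt {w t : ℕ} {S : Set (Fin n → Option α)} (hS : IsA n w t α S)
    (htw : t ≤ w) :
    #{v : Fin n → Option α | wt v = w} =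
      S.ncard * (Nat.choose (n - t) (w - t) * Fintype.card α ^ (w - t)) := by
  obtain ⟨hwt, hunique⟩ := hS
  have hfin : S.Finite := S.toFinite
  have hcount := card_mul_eq_card_mul SubFace (s := {v | wt v = w}) (t := hfin.toFinset) (m := 1)
    (n := Nat.choose (n - t) (w - t) * Fintype.card α ^ (w - t)) (fun v hv => ?_) (fun s hs => ?_)
  · rw [mul_one] at hcount
    rw [hcount, Set.ncard_eq_toFinset_card S hfin]
  · obtain ⟨s, hs, hs_unique⟩ := hunique v (mem_filter.mp hv).2
    refine card_eq_one.mpr ⟨s, ?_⟩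
    ext s'
    simp only [bipartiteAbove, mem_filter, Set.Finite.mem_toFinset, mem_singleton]
    exact ⟨hs_unique s', fun h => h ▸ hs⟩
  · have hs : wt s = t := hwt s (hfin.mem_toFinset.mp hs)
    rw [bipartiteBelow, filter_filter, ← hs]
    exact card_filter_wt_subFace s (hs ▸ htw)

theorem A_design_necessary_general (n q w t : ℕ) (htw : t ≤ w)
    (hex : ∃ S : Set (Fin n → Option (Fin q)), IsA n w t (Fin q) S) :
    Nat.choose (n - t) (w - t) * q ^ (w - t) ∣ Nat.choose n w * q ^ w := by
  obtain ⟨S, hS⟩ := hex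
  have hcount := hS.card_filter_wt htw
  rw [card_filter_wt, Fintype.card_fin] at hcount
  exact Dvd.intro_left _ hcount.symm

theorem A_design_necessary (n q w t : ℕ) (hwn : w ≤ n) (htw : t ≤ w) (ht : 1 ≤ t) (hq : 1 ≤ q)
    (hex : ∃ S : Set (Fin n → Option (Fin q)), IsA n w t (Fin q) S) :
    Nat.choose (n - t) (w - t) * q ^ (w - t) ∣ Nat.choose n w * q ^ w :=
  A_design_necessary_general n q w t htw hex
end
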